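/- If t is a clean vsub-term and unfold(t) is a fireball, then t is normal for both the multiplicative reduction →m and the abstraction-exponential reduction →eλ, and the ES-free body of t is a fireball. -/
import Mathlib


/-- Terms of the value substitution calculus, in de Bruijn notation:
variables, abstractions, applications and explicit substitutions
(`sub t u` is `t[x←u]`, binding de Bruijn index 0 of `t`). -/
inductive VTm : Type
  | var : Nat → VTm
  | lam : VTm → VTm
  | app : VTm → VTm → VTm
  | sub : VTm → VTm → VTm

namespace VTm

/-- Shift (by one) the free de Bruijn indices `≥ k`. -/
def shift (k : Nat) : VTm → VTm
  | var n => if k ≤ n then var (n+1) else var n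
  | lam t => lam (shift (k+1) t)
  | app t u => app (shift k t) (shift k u)
  | sub t u => sub (shift (k+1) t) (shift k u)

/-- Capture-avoiding (meta-level) substitution of `u` for variable `k`. -/
def subst : VTm → Nat → VTm → VTm
  | var n, k, u => if n = k then u else if k < n then var (n-1) else var n
  | lam t, k, u => lam (subst t (k+1) (shift 0 u))
  | app t s, k, u => app (subst t k u) (subst s k u)
  | sub t s, k, u => sub (subst t (k+1) (shift 0 u)) (subst s k u)

/-- vsub-values: variables and abstractions. -/
inductive IsVal : VTm → Prop
  | var : IsVal (var n)
  | lam : IsVal (lam t)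

/-- Multiplicative root rule `L⟨λx.t⟩u ↦m L⟨t[x←u]⟩` (the recursion on the
substitution context `L` performs the de Bruijn shifts corresponding to the
side condition that the variables bound by `L` do not occur free in `u`). -/
inductive RootM : VTm → VTm → Prop
  | beta : RootM (app (lam t) u) (sub t u)
  | under : RootM (app t (shift 0 u)) s → RootM (app (sub t r) u) (sub s r)

/-- Exponential root rule `t[x←L⟨v⟩] ↦e L⟨t{x:=v}⟩` for an abstraction `v`. -/
inductive RootEAbs : VTm → VTm → Prop
  | beta : RootEAbs (sub t (lam u)) (subst t 0 (lam u))
  | under : RootEAbs (sub (shift 1 t) b) s → RootEAbs (sub t (sub b r)) (sub s r)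

/-- Exponential root rule `t[x←L⟨v⟩] ↦e L⟨t{x:=v}⟩` for a variable `v`. -/
inductive RootEVar : VTm → VTm → Prop
  | beta : RootEVar (sub t (var n)) (subst t 0 (var n))
  | under : RootEVar (sub (shift 1 t) b) s → RootEVar (sub t (sub b r)) (sub s r)

/-- Closure of a root rule under the weak evaluation contexts
`E ::= ⟨·⟩ | t E | E t | E[x←u] | t[x←E]`. -/
inductive Clo (R : VTm → VTm → Prop) : VTm → VTm → Prop
  | root : R t u → Clo R t u
  | appL : Clo R t t' → Clo R (app t u) (app t' u)
  | appR : Clo R u u' → Clo R (app t u) (app t u')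
  | subL : Clo R t t' → Clo R (sub t u) (sub t' u)
  | subR : Clo R u u' → Clo R (sub t u) (sub t u')

/-- Multiplicative reduction `→m`. -/
def StepM : VTm → VTm → Prop := Clo RootM
/-- Abstraction-exponential reduction `→eλ`. -/
def StepEAbs : VTm → VTm → Prop := Clo RootEAbs
/-- Variable-exponential reduction `→evar`. -/
def StepEVar : VTm → VTm → Prop := Clo RootEVar
/-- Exponential reduction `→e = →eλ ∪ →evar`. -/
def StepE (t u : VTm) : Prop := StepEAbs t u ∨ StepEVar t u
/-- vsub-reduction `→vsub = →m ∪ →e`. -/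
def StepVsub (t u : VTm) : Prop := StepM t u ∨ StepE t u

/-- Swap the de Bruijn indices `k` and `k+1`. -/
def swap (k : Nat) : VTm → VTm
  | var n => if n = k then var (k+1) else if n = k+1 then var k else var n
  | lam t => lam (swap (k+1) t)
  | app t u => app (swap k t) (swap k u)
  | sub t u => sub (swap (k+1) t) (swap k u)

/-- Structural equivalence `≡`: least equivalence relation closed under
evaluation contexts generated by the four permutation axioms for explicit
substitutions (the de Bruijn shifts/swaps implement the freshness side
conditions). -/
inductive SEq : VTm → VTm → Prop
  | com : SEq (sub (sub t (shift 0 s)) u) (sub (sub (swap 0 t) (shift 0 u)) s)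
  | apR : SEq (app t (sub s u)) (sub (app (shift 0 t) s) u)
  | apL : SEq (app (sub t u) s) (sub (app t (shift 0 s)) u)
  | es  : SEq (sub t (sub u s)) (sub (sub (shift 1 t) u) s)
  | refl : SEq t t
  | symm : SEq t u → SEq u t
  | trans : SEq t u → SEq u s → SEq t s
  | appL : SEq t t' → SEq (app t u) (app t' u)
  | appR : SEq u u' → SEq (app t u) (app t u')
  | subL : SEq t t' → SEq (sub t u) (sub t' u)
  | subR : SEq u u' → SEq (sub t u) (sub t u')

/-- Terms without explicit substitutions. -/
def NoES : VTm → Prop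
  | var _ => True
  | lam t => NoES t
  | app t u => NoES t ∧ NoES u
  | sub _ _ => False

end VTm
open VTm

mutual
/-- Inert terms: `i ::= x | i f`. -/
inductive Inert : VTm → Prop
  | var : Inert (.var n)
  | app : Inert i → Fireball f → Inert (.app i f)
/-- Fireballs: `f ::= λx.t | i`. -/
inductive Fireball : VTm → Prop
  | lam : Fireball (.lam t)
  | inert : Inert i → Fireball i
end

/-- Fireball-calculus abstraction steps `→βλ` (weak contexts). -/
inductive StepBL : VTm → VTm → Prop
  | beta : StepBL (.app (.lam t) (.lam u)) (subst t 0 (.lam u))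
  | appL : StepBL t t' → StepBL (.app t u) (.app t' u)
  | appR : StepBL u u' → StepBL (.app t u) (.app t u')

/-- Fireball-calculus inert steps `→βi` (weak contexts). -/
inductive StepBI : VTm → VTm → Prop
  | beta : Inert i → StepBI (.app (.lam t) i) (subst t 0 i)
  | appL : StepBI t t' → StepBI (.app t u) (.app t' u)
  | appR : StepBI u u' → StepBI (.app t u) (.app t u')

/-- Clean vsub-terms: `u[x₁←i₁]…[xₙ←iₙ]` with `u` (the body) ES-free and
each `iₖ` an ES-free inert term. -/
inductive Clean : VTm → Prop
  | base : NoES t → Clean t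
  | sub : Clean t → NoES i → Inert i → Clean (.sub t i)

/-- Unfolding: turn all explicit substitutions into meta-level substitutions. -/
def unfold : VTm → VTm
  | .var n => .var n
  | .lam t => .lam (unfold t)
  | .app t u => .app (unfold t) (unfold u)
  | .sub t u => subst (unfold t) 0 (unfold u)

/-- The ES-free body of a (clean) vsub-term. -/
def body : VTm → VTm
  | .sub t _ => body t
  | .var n => .var n
  | .lam t => .lam t
  | .app t u => .app t u

/-- NoES terms contain no explicit substitutions, hence no eλ step. -/
lemma noES_not_eabs {t u : VTm} (h : Clo RootEAbs t u) (hn : NoES t) : False := by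
  induction h with
  | root hr => cases hr <;> exact hn
  | appL _ ih => exact ih hn.1
  | appR _ ih => exact ih hn.2
  | subL _ _ => exact hn
  | subR _ _ => exact hn

/-- Fireballs are m-normal. -/
lemma fb_not_m {t u : VTm} (h : Clo RootM t u) (hf : Fireball t) : False := by
  induction h with
  | root hr =>
    cases hr with
    | beta =>
      cases hf with
      | inert hi => cases hi with
        | app hi' _ => cases hi'
    | under =>
      cases hf with
      | inert hi => cases hi with
        | app hi' _ => cases hi'
  | appL _ ih =>
    cases hf with
    | inert hi => cases hi with
      | app hi' _ => exact ih (Fireball.inert hi')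
  | appR _ ih =>
    cases hf with
    | inert hi => cases hi with
      | app _ hf' => exact ih hf'
  | subL _ _ => cases hf with | inert hi => cases hi
  | subR _ _ => cases hf with | inert hi => cases hi

/-- Substitution reflects inertness and fireball-ness. -/
lemma subst_reflect (u : VTm) : ∀ k v,
    (Inert (subst u k v) → Inert u) ∧ (Fireball (subst u k v) → Fireball u) := by
  induction u with
  | var n => exact fun k v => ⟨fun _ => Inert.var, fun _ => Fireball.inert Inert.var⟩
  | lam t ih =>
    intro k v
    refine ⟨fun h => ?_, fun _ => Fireball.lam⟩
    simp only [subst] at h; cases h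
  | app a b iha ihb =>
    intro k v
    constructor
    · intro h
      simp only [subst] at h
      cases h with
      | app hi hf => exact Inert.app ((iha k v).1 hi) ((ihb k v).2 hf)
    · intro h
      simp only [subst] at h
      cases h with
      | inert hi =>
        cases hi with
        | app hi' hf => exact Fireball.inert (Inert.app ((iha k v).1 hi') ((ihb k v).2 hf))
  | sub a b iha ihb =>
    intro k v
    constructor
    · intro h; simp only [subst] at h; cases h
    · intro h; simp only [subst] at h
      cases h with | inert hi => cases hi

lemma unfold_noES {t : VTm} (hn : NoES t) : unfold t = t := by
  induction t with
  | var n => rfl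
  | lam t ih => simp [unfold, ih hn]
  | app a b iha ihb => simp [unfold, iha hn.1, ihb hn.2]
  | sub a b _ _ => exact absurd hn id

lemma body_noES {t : VTm} (hn : NoES t) : body t = t := by
  cases t <;> first | rfl | exact absurd hn id

/-- if `t` is clean and `unfold t` is a fireball, then `t` is
`{m, eλ}`-normal and its body is a fireball. -/
theorem clean_unfold_fireball_normal (t : VTm)
    (hc : Clean t) (hf : Fireball (unfold t)) :
    (∀ u, ¬ StepM t u) ∧ (∀ u, ¬ StepEAbs t u) ∧ Fireball (body t) := by
  induction hc with
  | base hn =>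
    rw [unfold_noES hn] at hf
    exact ⟨fun u h => fb_not_m h hf, fun u h => noES_not_eabs h hn,
      by rw [body_noES hn]; exact hf⟩
  | @sub t i _ hni hii ih =>
    have hf' : Fireball (unfold t) :=
      (subst_reflect (unfold t) 0 (unfold i)).2 hf
    obtain ⟨hm, he, hb⟩ := ih hf'
    refine ⟨fun u h => ?_, fun u h => ?_, hb⟩
    · cases h with
      | root hr => cases hr
      | subL h' => exact hm _ h'
      | subR h' => exact fb_not_m h' (Fireball.inert hii)
    · cases h with
      | root hr =>
        cases hr with
        | beta => cases hii
        | under => exact hni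
      | subL h' => exact he _ h'
      | subR h' => exact noES_not_eabs h' hni
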